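/- The 4-dimensional complex algebra T⁴₀₁ with nonzero products e₁e₁ = e₂, e₁e₂ = e₄, e₂e₁ = e₃ is a one-generated nilpotent terminal algebra whose annihilator is the 2-dimensional subspace spanned by e₃ and e₄. -/
import Mathlib


/-- For a multiplication `P` and a linear operator `A`, the bracket
`[A,P](x,y) = A(P(x,y)) - P(A(x),y) - P(x,A(y))`. -/
def opBr {V : Type*} [AddCommGroup V] (P : V → V → V) (A : V → V) (x y : V) : V :=
  A (P x y) - P (A x) y - P x (A y)

/-- For bilinear `B` and multiplication `P`, the bracket `[B,P]`. -/
def biBr {V : Type*} [AddCommGroup V] (B P : V → V → V) (x y z : V) : V :=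
  B (P x y) z + B x (P y z) + B y (P x z) - P (B x y) z - P x (B y z) - P y (B x z)

/-- An algebra with multiplication `P` is terminal if `[[[P,a],P],P] = 0` for all `a`,
where `[P,a]` is the left multiplication operator `P a`. -/
def IsTerminalMul {V : Type*} [AddCommGroup V] (P : V → V → V) : Prop :=
  ∀ a x y z, biBr (opBr P (P a)) P x y z = 0

/-- `prods mul n` is the set of all products of `n + 1` elements, in any association. -/
def prods {V : Type*} (mul : V → V → V) : ℕ → Set V
  | 0 => Set.univ
  | n + 1 => ⋃ i : Fin (n + 1),
      {z | ∃ a ∈ prods mul i.1, ∃ b ∈ prods mul (n - i.1), z = mul a b}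

/-- An algebra is nilpotent if all products of sufficiently many elements vanish. -/
def IsNilpotentMul {V : Type*} [Zero V] (mul : V → V → V) : Prop :=
  ∃ n : ℕ, ∀ x ∈ prods mul n, x = 0

/-- The algebra `(V, mul)` is generated by `g`: every submodule containing `g` and closed
under multiplication is all of `V`. -/
def GeneratedBy (K : Type*) {V : Type*} [Field K] [AddCommGroup V] [Module K V]
    (mul : V → V → V) (g : V) : Prop :=
  ∀ S : Submodule K V, (∀ x ∈ S, ∀ y ∈ S, mul x y ∈ S) → g ∈ S → ∀ v, v ∈ S


/-- The 4-dimensional algebra `T⁴₀₁` with nonzero products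
`e₁e₁ = e₂`, `e₁e₂ = e₄`, `e₂e₁ = e₃`. -/
def mulT401 (u v : Fin 4 → ℂ) : Fin 4 → ℂ :=
  ![0, u 0 * v 0, u 1 * v 0, u 0 * v 1]


private lemma prods1_T401 (x : Fin 4 → ℂ) (hx : x ∈ prods mulT401 1) : x 0 = 0 := by
  simp only [prods, Set.mem_iUnion] at hx
  obtain ⟨i, a, _, b, _, rfl⟩ := hx
  simp [mulT401]

private lemma prods2_T401 (x : Fin 4 → ℂ) (hx : x ∈ prods mulT401 2) : x 0 = 0 ∧ x 1 = 0 := by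
  simp only [prods, Set.mem_iUnion] at hx
  obtain ⟨i, a, ha, b, hb, rfl⟩ := hx
  refine ⟨by simp [mulT401], ?_⟩
  fin_cases i
  · have := prods1_T401 b hb
    simp_all [mulT401]
  · have := prods1_T401 a ha
    simp_all [mulT401]

private lemma prods3_T401 (x : Fin 4 → ℂ) (hx : x ∈ prods mulT401 3) : x = 0 := by
  simp only [prods, Set.mem_iUnion] at hx
  obtain ⟨i, a, ha, b, hb, rfl⟩ := hx
  fin_cases i
  · obtain ⟨h0, h1⟩ := prods2_T401 b hb
    funext j; fin_cases j <;> simp_all [mulT401]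
  · have h0 := prods1_T401 a ha
    have h1 := prods1_T401 b hb
    funext j; fin_cases j <;> simp_all [mulT401]
  · obtain ⟨h0, h1⟩ := prods2_T401 a ha
    funext j; fin_cases j <;> simp_all [mulT401]

/-- `T⁴₀₁` is a one-generated nilpotent terminal algebra whose annihilator is the
2-dimensional subspace spanned by `e₃` and `e₄`. -/
theorem T401_terminal_nilpotent_oneGenerated_annihilator :
    IsTerminalMul mulT401 ∧ IsNilpotentMul mulT401 ∧
      (∃ g, GeneratedBy ℂ mulT401 g) ∧
      {x : Fin 4 → ℂ | ∀ a, mulT401 x a = 0 ∧ mulT401 a x = 0}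
        = ↑(Submodule.span ℂ {![0, 0, 1, 0], ![0, 0, 0, 1]} : Submodule ℂ (Fin 4 → ℂ)) := by
  refine ⟨?_, ?_, ?_, ?_⟩
  · intro a x y z
    funext i
    fin_cases i <;> simp [biBr, opBr, mulT401]
  · exact ⟨3, prods3_T401⟩
  · refine ⟨![1,0,0,0], ?_⟩
    intro S hmul hg v
    have h2 : (![0,1,0,0] : Fin 4 → ℂ) ∈ S := by
      have := hmul _ hg _ hg
      have e : mulT401 ![1,0,0,0] ![1,0,0,0] = ![0,1,0,0] := by
        funext i; fin_cases i <;> simp [mulT401]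
      rwa [e] at this
    have h3 : (![0,0,1,0] : Fin 4 → ℂ) ∈ S := by
      have := hmul _ h2 _ hg
      have e : mulT401 ![0,1,0,0] ![1,0,0,0] = ![0,0,1,0] := by
        funext i; fin_cases i <;> simp [mulT401]
      rwa [e] at this
    have h4 : (![0,0,0,1] : Fin 4 → ℂ) ∈ S := by
      have := hmul _ hg _ h2
      have e : mulT401 ![1,0,0,0] ![0,1,0,0] = ![0,0,0,1] := by
        funext i; fin_cases i <;> simp [mulT401]
      rwa [e] at this
    have hv : v = v 0 • ![1,0,0,0] + v 1 • ![0,1,0,0] + v 2 • ![0,0,1,0] + v 3 • ![0,0,0,1] := by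
      funext i; fin_cases i <;> simp
    rw [hv]
    exact S.add_mem (S.add_mem (S.add_mem (S.smul_mem _ hg) (S.smul_mem _ h2))
      (S.smul_mem _ h3)) (S.smul_mem _ h4)
  · ext x
    simp only [Set.mem_setOf_eq, SetLike.mem_coe, Submodule.mem_span_pair]
    constructor
    · intro h
      obtain ⟨h1, _⟩ := h ![1,0,0,0]
      have hx0 : x 0 = 0 := by simpa [mulT401] using congrFun h1 1
      have hx1 : x 1 = 0 := by simpa [mulT401] using congrFun h1 2
      exact ⟨x 2, x 3, by funext i; fin_cases i <;> simp [hx0, hx1]⟩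
    · rintro ⟨c, d, rfl⟩ a
      constructor <;> (funext i; fin_cases i <;> simp [mulT401])
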